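/- Let a < b < c be real numbers, θ_l, θ_r ∈ [0,1], α ∈ (0,1), and set k = α·θ_l − (1-α)·θ_r, T(x) = (x-a)²/((b-a)(c-a)), U(x) = (c-x)²/((c-a)(c-b)). Define F : ℝ → ℝ by F(x) = 0 for x ≤ a; F(x) = T(x) − k·T(x) for a < x ≤ a + (b-a)/√2; F(x) = T(x) − k·((b-a)/(c-a) − T(x)) for a + (b-a)/√2 ≤ x < b; F(b) = (b-a)/(c-a); F(x) = 1 − U(x) − k·((c-b)/(c-a) − U(x)) for b < x ≤ c − (c-b)/√2; F(x) = 1 − U(x) − k·U(x) for c − (c-b)/√2 ≤ x < c; F(x) = 1 for x ≥ c. Then F is monotone increasing on ℝ (i.e., x ≤ y implies F(x) ≤ F(y)). -/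

import Mathlib

/-- `T(x) = (x-a)²/((b-a)(c-a))`. -/
noncomputable def Ttri (a b c x : ℝ) : ℝ := (x - a) ^ 2 / ((b - a) * (c - a))

/-- `U(x) = (c-x)²/((c-a)(c-b))`. -/
noncomputable def Utri (a b c x : ℝ) : ℝ := (c - x) ^ 2 / ((c - a) * (c - b))

/-- The reduced single-fold uncertainty distribution, via the α-optimistic value
criterion with `k = α·θ_l − (1-α)·θ_r`, of the triangular two-fold uncertain
variable with parameters `a < b < c`. -/
noncomputable def triReduced (a b c k : ℝ) (x : ℝ) : ℝ :=
  if x ≤ a then 0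
  else if x ≤ a + (b - a) / Real.sqrt 2 then Ttri a b c x - k * Ttri a b c x
  else if x < b then Ttri a b c x - k * ((b - a) / (c - a) - Ttri a b c x)
  else if x = b then (b - a) / (c - a)
  else if x ≤ c - (c - b) / Real.sqrt 2 then
    1 - Utri a b c x - k * ((c - b) / (c - a) - Utri a b c x)
  else if x < c then 1 - Utri a b c x - k * Utri a b c x
  else 1

/-!
The breakpoints `m₁ = a + (b - a) / √2` and `m₂ = c - (c - b) / √2` cut `ℝ` into six closed
pieces on which the function agrees with `0`, `(1 - k) T`, `(1 + k) T - k d`,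
`1 - (1 - k) U - k e`, `1 - (1 + k) U` and `1`, where `d = (b - a) / (c - a)` and
`e = (c - b) / (c - a) = 1 - d`. As `T` increases on `[a, ∞)`, `U` decreases on `(-∞, c]` and
`|k| ≤ 1`, each piece is monotone. The breakpoints are where `T` and `U` reach half their value
at the mode `b`, which makes adjacent formulas agree at the common endpoints, so the monotone
pieces glue together.
-/

open Set Real

theorem MonotoneOn.Iic_union_Icc {α β : Type*} [LinearOrder α] [Preorder β] {f : α → β}
    {a b : α} (h₁ : MonotoneOn f (Iic a)) (h₂ : MonotoneOn f (Icc a b)) (hab : a ≤ b) :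
    MonotoneOn f (Iic b) := by
  rw [← Iic_union_Icc_eq_Iic hab]
  exact h₁.union_right h₂ isGreatest_Iic (isLeast_Icc hab)

lemma add_div_sqrt_two_mem_Ioo {x y : ℝ} (h : x < y) : x + (y - x) / √2 ∈ Ioo x y := by
  have h₁ : 1 < √2 := by rw [lt_sqrt zero_le_one]; norm_num
  have h₂ : (y - x) / √2 < y - x := div_lt_self (sub_pos.mpr h) h₁
  have h₃ : 0 < (y - x) / √2 := div_pos (sub_pos.mpr h) (by positivity)
  constructor <;> linarith

lemma sub_div_sqrt_two_mem_Ioo {x y : ℝ} (h : x < y) : y - (y - x) / √2 ∈ Ioo x y := by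
  obtain ⟨h₁, h₂⟩ := add_div_sqrt_two_mem_Ioo h
  constructor <;> linarith

lemma div_sqrt_two_sq (x : ℝ) : (x / √2) ^ 2 = x ^ 2 / 2 := by
  rw [div_pow, sq_sqrt zero_le_two]

section Triangular

variable {a b c k : ℝ}

lemma Ttri_apply_self : Ttri a b c a = 0 := by simp [Ttri]

lemma Ttri_apply_mode (hab : a ≠ b) : Ttri a b c b = (b - a) / (c - a) := by
  have : b - a ≠ 0 := sub_ne_zero.mpr hab.symm
  rw [Ttri, sq, mul_div_mul_left _ _ this]

lemma Ttri_apply_add_div_sqrt_two (hab : a ≠ b) :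
    Ttri a b c (a + (b - a) / √2) = (b - a) / (c - a) / 2 := by
  rw [Ttri, add_sub_cancel_left, div_sqrt_two_sq, div_right_comm, ← Ttri, Ttri_apply_mode hab]

lemma Ttri_monotoneOn (hab : a ≤ b) (hac : a ≤ c) : MonotoneOn (Ttri a b c) (Ici a) := by
  intro x hx y hy hxy
  have : 0 ≤ (b - a) * (c - a) := mul_nonneg (sub_nonneg.mpr hab) (sub_nonneg.mpr hac)
  unfold Ttri
  gcongr
  exact sub_nonneg.mpr hx

lemma Utri_apply_self : Utri a b c c = 0 := by simp [Utri]

lemma Utri_apply_mode (hbc : b ≠ c) : Utri a b c b = (c - b) / (c - a) := by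
  have : c - b ≠ 0 := sub_ne_zero.mpr hbc.symm
  rw [Utri, sq, mul_comm (c - a), mul_div_mul_left _ _ this]

lemma Utri_apply_sub_div_sqrt_two (hbc : b ≠ c) :
    Utri a b c (c - (c - b) / √2) = (c - b) / (c - a) / 2 := by
  rw [Utri, sub_sub_cancel, div_sqrt_two_sq, div_right_comm, ← Utri, Utri_apply_mode hbc]

lemma Utri_antitoneOn (hac : a ≤ c) (hbc : b ≤ c) : AntitoneOn (Utri a b c) (Iic c) := by
  intro x hx y hy hxy
  have : 0 ≤ (c - a) * (c - b) := mul_nonneg (sub_nonneg.mpr hac) (sub_nonneg.mpr hbc)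
  unfold Utri
  gcongr
  exact sub_nonneg.mpr hy

lemma triReduced_eqOn_Iic : EqOn (triReduced a b c k) (fun _ ↦ 0) (Iic a) := by
  intro x hx
  simp only [triReduced, if_pos (show x ≤ a from hx)]

lemma triReduced_eqOn_Icc_left :
    EqOn (triReduced a b c k) (fun x ↦ (1 - k) * Ttri a b c x) (Icc a (a + (b - a) / √2)) := by
  rintro x ⟨hax, hx⟩
  rcases hax.eq_or_lt with rfl | hax
  · simp [triReduced, Ttri_apply_self]
  · rw [triReduced, if_neg hax.not_ge, if_pos hx]
    ring

lemma triReduced_eqOn_Icc_left_mid (hab : a < b) :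
    EqOn (triReduced a b c k) (fun x ↦ (1 + k) * Ttri a b c x - k * ((b - a) / (c - a)))
      (Icc (a + (b - a) / √2) b) := by
  have hma := (add_div_sqrt_two_mem_Ioo hab).1
  rintro x ⟨hmx, hxb⟩
  dsimp only
  rcases hmx.eq_or_lt with rfl | hmx
  · rw [triReduced, if_neg hma.not_ge, if_pos le_rfl, Ttri_apply_add_div_sqrt_two hab.ne]
    ring
  rcases hxb.eq_or_lt with hxb | hxb
  · subst x
    rw [triReduced, if_neg hab.not_ge, if_neg hmx.not_ge, if_neg (lt_irrefl _), if_pos rfl,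
      Ttri_apply_mode hab.ne]
    ring
  · rw [triReduced, if_neg (hma.trans hmx).not_ge, if_neg hmx.not_ge, if_pos hxb]
    ring

lemma triReduced_eqOn_Icc_right_mid (hab : a < b) (hbc : b < c) :
    EqOn (triReduced a b c k) (fun x ↦ 1 - (1 - k) * Utri a b c x - k * ((c - b) / (c - a)))
      (Icc b (c - (c - b) / √2)) := by
  have hmb := (add_div_sqrt_two_mem_Ioo hab).2
  rintro x ⟨hbx, hxm⟩
  dsimp only
  rcases hbx.eq_or_lt with hbx | hbx
  · subst x
    have hca : c - a ≠ 0 := sub_ne_zero.mpr (hab.trans hbc).ne'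
    rw [triReduced, if_neg hab.not_ge, if_neg hmb.not_ge, if_neg (lt_irrefl _), if_pos rfl,
      Utri_apply_mode hbc.ne]
    field_simp
    ring
  · rw [triReduced, if_neg (hab.trans hbx).not_ge, if_neg (hmb.trans hbx).not_ge,
      if_neg hbx.not_gt, if_neg hbx.ne', if_pos hxm]
    ring

lemma triReduced_eqOn_Icc_right (hab : a < b) (hbc : b < c) :
    EqOn (triReduced a b c k) (fun x ↦ 1 - (1 + k) * Utri a b c x) (Icc (c - (c - b) / √2) c) := by
  have hmb := (sub_div_sqrt_two_mem_Ioo hbc).1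
  have hma := (add_div_sqrt_two_mem_Ioo hab).2
  rintro x ⟨hmx, hxc⟩
  have hb := hmb.trans_le hmx
  have head : triReduced a b c k x = if x ≤ c - (c - b) / √2 then
      1 - Utri a b c x - k * ((c - b) / (c - a) - Utri a b c x)
      else if x < c then 1 - Utri a b c x - k * Utri a b c x else 1 := by
    rw [triReduced, if_neg (hab.trans hb).not_ge, if_neg (hma.trans hb).not_ge, if_neg hb.not_gt,
      if_neg hb.ne']
  rw [head]
  dsimp only
  rcases hmx.eq_or_lt with rfl | hmx
  · rw [if_pos le_rfl, Utri_apply_sub_div_sqrt_two hbc.ne]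
    ring
  rcases hxc.eq_or_lt with hxc | hxc
  · subst x
    rw [if_neg hmx.not_ge, if_neg (lt_irrefl _), Utri_apply_self]
    ring
  · rw [if_neg hmx.not_ge, if_pos hxc]
    ring

lemma triReduced_eqOn_Ici (hab : a < b) (hbc : b < c) :
    EqOn (triReduced a b c k) (fun _ ↦ 1) (Ici c) := by
  have hmc := (sub_div_sqrt_two_mem_Ioo hbc).2
  have hma := (add_div_sqrt_two_mem_Ioo hab).2
  intro x hcx
  have hbx : b < x := hbc.trans_le hcx
  simp only [triReduced, if_neg (hab.trans hbx).not_ge, if_neg (hma.trans hbx).not_ge,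
    if_neg hbx.not_gt, if_neg hbx.ne', if_neg (hmc.trans_le hcx).not_ge,
    if_neg (not_lt.mpr (show c ≤ x from hcx))]

lemma triReduced_monotoneOn_Icc_left (hab : a ≤ b) (hac : a ≤ c) (hk : k ≤ 1) :
    MonotoneOn (triReduced a b c k) (Icc a (a + (b - a) / √2)) := by
  refine MonotoneOn.congr ?_ triReduced_eqOn_Icc_left.symm
  intro x hx y hy hxy
  have := Ttri_monotoneOn hab hac hx.1 hy.1 hxy
  dsimp only
  gcongr

lemma triReduced_monotoneOn_Icc_left_mid (hab : a < b) (hbc : b < c) (hk : -1 ≤ k) :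
    MonotoneOn (triReduced a b c k) (Icc (a + (b - a) / √2) b) := by
  refine MonotoneOn.congr ?_ (triReduced_eqOn_Icc_left_mid hab).symm
  have hma := (add_div_sqrt_two_mem_Ioo hab).1.le
  intro x hx y hy hxy
  have := Ttri_monotoneOn hab.le (hab.trans hbc).le (hma.trans hx.1) (hma.trans hy.1) hxy
  dsimp only
  gcongr
  linarith

lemma triReduced_monotoneOn_Icc_right_mid (hab : a < b) (hbc : b < c) (hk : k ≤ 1) :
    MonotoneOn (triReduced a b c k) (Icc b (c - (c - b) / √2)) := by
  refine MonotoneOn.congr ?_ (triReduced_eqOn_Icc_right_mid hab hbc).symm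
  have hmc := (sub_div_sqrt_two_mem_Ioo hbc).2.le
  intro x hx y hy hxy
  have := Utri_antitoneOn (hab.trans hbc).le hbc.le (hx.2.trans hmc) (hy.2.trans hmc) hxy
  dsimp only
  gcongr

lemma triReduced_monotoneOn_Icc_right (hab : a < b) (hbc : b < c) (hk : -1 ≤ k) :
    MonotoneOn (triReduced a b c k) (Icc (c - (c - b) / √2) c) := by
  refine MonotoneOn.congr ?_ (triReduced_eqOn_Icc_right hab hbc).symm
  intro x hx y hy hxy
  have := Utri_antitoneOn (hab.trans hbc).le hbc.le hx.2 hy.2 hxy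
  dsimp only
  gcongr
  linarith

theorem triReduced_monotone_of_abs_le_one (hab : a < b) (hbc : b < c) (hk : |k| ≤ 1) :
    Monotone (triReduced a b c k) := by
  obtain ⟨hk₁, hk₂⟩ := abs_le.mp hk
  obtain ⟨hma, hmb⟩ := add_div_sqrt_two_mem_Ioo hab
  obtain ⟨hbm, hmc⟩ := sub_div_sqrt_two_mem_Ioo hbc
  have hac := (hab.trans hbc).le
  exact (((((monotoneOn_const.congr triReduced_eqOn_Iic.symm).Iic_union_Icc
    (triReduced_monotoneOn_Icc_left hab.le hac hk₂) hma.le).Iic_union_Icc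
    (triReduced_monotoneOn_Icc_left_mid hab hbc hk₁) hmb.le).Iic_union_Icc
    (triReduced_monotoneOn_Icc_right_mid hab hbc hk₂) hbm.le).Iic_union_Icc
    (triReduced_monotoneOn_Icc_right hab hbc hk₁) hmc.le).Iic_union_Ici
    (monotoneOn_const.congr (triReduced_eqOn_Ici hab hbc).symm)

end Triangular

lemma abs_mul_sub_one_sub_mul_le_one {α θl θr : ℝ} (hθl : θl ∈ Icc (0 : ℝ) 1)
    (hθr : θr ∈ Icc (0 : ℝ) 1) (hα : α ∈ Icc (0 : ℝ) 1) : |α * θl - (1 - α) * θr| ≤ 1 := by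
  obtain ⟨hl₀, hl₁⟩ := hθl
  obtain ⟨hr₀, hr₁⟩ := hθr
  obtain ⟨hα₀, hα₁⟩ := hα
  rw [abs_le]
  constructor <;> nlinarith

theorem triReduced_monotone (a b c θl θr α : ℝ) (hab : a < b) (hbc : b < c)
    (hθl : θl ∈ Set.Icc (0 : ℝ) 1) (hθr : θr ∈ Set.Icc (0 : ℝ) 1)
    (hα : α ∈ Set.Ioo (0 : ℝ) 1) :
    ∀ x y : ℝ, x ≤ y →
      triReduced a b c (α * θl - (1 - α) * θr) x
        ≤ triReduced a b c (α * θl - (1 - α) * θr) y :=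
  fun _ _ hxy ↦ triReduced_monotone_of_abs_le_one hab hbc
    (abs_mul_sub_one_sub_mul_le_one hθl hθr (Ioo_subset_Icc_self hα)) hxy
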